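/- Assume ϑ := min{α D_min, d + α D_min − g c⁻¹ r d, d} > 0. For every ε > 0, the compact set B_ε := {(s, m₁, m₂) ∈ ℝ³₊ : g s + c(m₁ + m₂) ≤ g D_max s_in/ϑ + ε} is absorbing for the random chemostat system, uniformly over all admissible noise paths: for every bounded set B ⊂ ℝ³₊ there exists t_B > 0 such that for every continuous φ : [0,∞) → [−a, a] and every initial condition in B, the corresponding solution lies in B_ε for all t ≥ t_B. -/

import Mathlib

/-!
The Lyapunov function `V = g s + c (m₁ + m₂)` cancels the consumption and the mutation terms,
and the three quantities in `ϑ` are exactly what makes `V' ≤ g D_max s_in − ϑ V` on the positive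
octant, whatever the noise. Grönwall then gives
`V(t) ≤ g D_max s_in / ϑ + (V(0) − g D_max s_in / ϑ) e^{−ϑ t}`, and `V(0)` is bounded on `B`.
-/

open Set Real Filter Topology

theorem le_gronwallBound_of_hasDerivWithinAt_le {f f' : ℝ → ℝ} {δ K ε a b : ℝ}
    (hf : ContinuousOn f (Icc a b)) (hf' : ∀ x ∈ Ico a b, HasDerivWithinAt f (f' x) (Ici x) x)
    (ha : f a ≤ δ) (bound : ∀ x ∈ Ico a b, f' x ≤ K * f x + ε) :
    ∀ x ∈ Icc a b, f x ≤ gronwallBound δ K ε (x - a) :=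
  le_gronwallBound_of_liminf_deriv_right_le hf
    (fun x hx _ hr => by
      simpa only [slope_def_field, div_eq_inv_mul] using (hf' x hx).liminf_right_slope_le hr)
    ha bound

theorem le_div_add_mul_exp_of_hasDerivWithinAt_le {f f' : ℝ → ℝ} {C ϑ t : ℝ} (hϑ : ϑ ≠ 0)
    (hf : ∀ x ∈ Ici (0 : ℝ), HasDerivWithinAt f (f' x) (Ici 0) x)
    (bound : ∀ x ∈ Ici (0 : ℝ), f' x ≤ C - ϑ * f x) (ht : 0 ≤ t) :
    f t ≤ C / ϑ + (f 0 - C / ϑ) * exp (-ϑ * t) := by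
  have hgron := le_gronwallBound_of_hasDerivWithinAt_le (K := -ϑ) (ε := C) (b := t)
    (fun x hx => (hf x hx.1).continuousWithinAt.mono fun _ hy => hy.1)
    (fun x hx => (hf x hx.1).mono (Ici_subset_Ici.2 hx.1)) le_rfl
    (fun x hx => by linarith [bound x hx.1]) t ⟨ht, le_rfl⟩
  rw [sub_zero, gronwallBound_of_K_ne_0 (neg_ne_zero.2 hϑ)] at hgron
  convert hgron using 1
  field_simp
  ring

theorem exists_pos_forall_ge_mul_exp_neg_le (M : ℝ) {ϑ ε : ℝ} (hϑ : 0 < ϑ) (hε : 0 < ε) :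
    ∃ T > 0, ∀ t ≥ T, M * exp (-ϑ * t) ≤ ε := by
  have hlim : Tendsto (fun t => M * exp (-ϑ * t)) atTop (𝓝 0) := by
    simpa only [mul_zero, neg_mul, Function.comp_def, id] using
      (tendsto_exp_neg_atTop_nhds_zero.comp (tendsto_id.const_mul_atTop hϑ)).const_mul M
  obtain ⟨T, hT⟩ := eventually_atTop.1 ((tendsto_order.1 hlim).2 ε hε)
  exact ⟨max T 1, by positivity, fun t ht => (hT t (le_of_max_le_left ht)).le⟩

theorem chemostat_lyapunov_deriv_le {D a sIn c g d r α α₁ α₂ r₁ r₂ ϑ φ μs s m₁ m₂ : ℝ}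
    (hsIn : 0 ≤ sIn) (hc : 0 < c) (hg : 0 ≤ g) (hα : 0 ≤ α) (hr₁ : 0 ≤ r₁) (hr₂ : 0 ≤ r₂)
    (hϑ₁ : ϑ ≤ α * (D - a)) (hϑ₂ : ϑ ≤ d + α * (D - a) - g * c⁻¹ * r * d) (hϑ₃ : ϑ ≤ d)
    (hφ : φ ∈ Icc (-a) a) (hs : 0 ≤ s) (hm₁ : 0 ≤ m₁) (hm₂ : 0 ≤ m₂) :
    g * ((D + φ) * (sIn - α * s) - c * μs * (m₁ + m₂) + r * d * m₁)
      + c * ((m₁ * (-d - α * (D + φ) + g * μs - r₁ * m₁ - r₂ * m₂ - α₁) + α₂ * m₂)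
        + (m₂ * (-d + g * μs - r₁ * m₁ - r₂ * m₂ - α₂) + α₁ * m₁))
      ≤ g * (D + a) * sIn - ϑ * (g * s + c * (m₁ + m₂)) := by
  have hcancel : g * ((D + φ) * (sIn - α * s) - c * μs * (m₁ + m₂) + r * d * m₁)
      + c * ((m₁ * (-d - α * (D + φ) + g * μs - r₁ * m₁ - r₂ * m₂ - α₁) + α₂ * m₂)
        + (m₂ * (-d + g * μs - r₁ * m₁ - r₂ * m₂ - α₂) + α₁ * m₁))
      = g * (D + φ) * sIn - α * (D + φ) * (g * s) - (c * d + c * (α * (D + φ)) - g * r * d) * m₁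
        - d * (c * m₂) - c * ((m₁ + m₂) * (r₁ * m₁ + r₂ * m₂)) := by ring
  have hdilution : ϑ ≤ α * (D + φ) := hϑ₁.trans (by gcongr; linarith [hφ.1])
  have hinflow : g * (D + φ) * sIn ≤ g * (D + a) * sIn := by
    gcongr
    exact hφ.2
  have hm₁_rate : c * ϑ ≤ c * d + c * (α * (D + φ)) - g * r * d :=
    calc c * ϑ ≤ c * (d + α * (D - a) - g * c⁻¹ * r * d) := by gcongr
      _ = c * d + c * (α * (D - a)) - g * r * d := by field_simp
      _ ≤ c * d + c * (α * (D + φ)) - g * r * d := by gcongr; linarith [hφ.1]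
  have hquad : 0 ≤ c * ((m₁ + m₂) * (r₁ * m₁ + r₂ * m₂)) := by positivity
  rw [hcancel]
  linarith [mul_le_mul_of_nonneg_right hdilution (mul_nonneg hg hs),
    mul_le_mul_of_nonneg_right hm₁_rate hm₁, mul_le_mul_of_nonneg_right hϑ₃ (mul_nonneg hc.le hm₂)]

theorem random_chemostat_absorbing_set_general
    (D a sIn c g d r α α₁ α₂ r₁ r₂ : ℝ)
    (hsIn : 0 < sIn) (hc : 0 < c)
    (hg : 0 < g) (hα : 0 < α) (hr₁ : 0 < r₁) (hr₂ : 0 < r₂)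
    (μ : ℝ → ℝ)
    (ϑ : ℝ) (hϑdef : ϑ = min (α * (D - a)) (min (d + α * (D - a) - g * c⁻¹ * r * d) d))
    (hϑpos : 0 < ϑ)
    (ε : ℝ) (hε : 0 < ε)
    (B : Set (ℝ × ℝ × ℝ)) (hBbdd : Bornology.IsBounded B) :
    ∃ tB : ℝ, 0 < tB ∧
      ∀ φ : ℝ → ℝ, ContinuousOn φ (Set.Ici 0) →
        (∀ t ∈ Set.Ici (0:ℝ), φ t ∈ Set.Icc (-a) a) →
        ∀ s m₁ m₂ : ℝ → ℝ,
          (∀ t ∈ (Set.Ici (0:ℝ)),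
            HasDerivWithinAt s ((D + φ t) * (sIn - α * s t) - c * μ (s t) * (m₁ t + m₂ t) + r * d * m₁ t) (Set.Ici (0:ℝ)) t ∧
            HasDerivWithinAt m₁ (m₁ t * (-d - α * (D + φ t) + g * μ (s t) - r₁ * m₁ t - r₂ * m₂ t - α₁) + α₂ * m₂ t) (Set.Ici (0:ℝ)) t ∧
            HasDerivWithinAt m₂ (m₂ t * (-d + g * μ (s t) - r₁ * m₁ t - r₂ * m₂ t - α₂) + α₁ * m₁ t) (Set.Ici (0:ℝ)) t) →
          (∀ t ∈ (Set.Ici (0:ℝ)), 0 ≤ s t ∧ 0 ≤ m₁ t ∧ 0 ≤ m₂ t) →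
          (s 0, m₁ 0, m₂ 0) ∈ B →
          ∀ t ≥ tB, (0 ≤ s t ∧ 0 ≤ m₁ t ∧ 0 ≤ m₂ t) ∧
            g * s t + c * (m₁ t + m₂ t) ≤ g * (D + a) * sIn / ϑ + ε := by
  obtain ⟨M, hM⟩ : BddAbove ((fun p : ℝ × ℝ × ℝ => g * p.1 + c * (p.2.1 + p.2.2)) '' B) :=
    (hBbdd.isCompact_closure.bddAbove_image (by fun_prop : Continuous _).continuousOn).mono
      (image_mono subset_closure)
  obtain ⟨tB, htB, hdecay⟩ :=
    exists_pos_forall_ge_mul_exp_neg_le (M - g * (D + a) * sIn / ϑ) hϑpos hε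
  have hϑ : ϑ ≤ α * (D - a) ∧ ϑ ≤ d + α * (D - a) - g * c⁻¹ * r * d ∧ ϑ ≤ d := by
    simpa only [le_min_iff] using hϑdef.le
  refine ⟨tB, htB, fun φ _ hφ s m₁ m₂ hode hpos hinit t ht => ⟨hpos t (htB.le.trans ht), ?_⟩⟩
  have hV := le_div_add_mul_exp_of_hasDerivWithinAt_le
    (f := fun τ => g * s τ + c * (m₁ τ + m₂ τ)) hϑpos.ne'
    (fun x hx => ((hode x hx).1.const_mul g).add (((hode x hx).2.1.add (hode x hx).2.2).const_mul c))
    (fun x hx => chemostat_lyapunov_deriv_le hsIn.le hc hg.le hα.le hr₁.le hr₂.le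
      hϑ.1 hϑ.2.1 hϑ.2.2 (hφ x hx) (hpos x hx).1 (hpos x hx).2.1 (hpos x hx).2.2)
    (htB.le.trans ht)
  have hV0 : g * s 0 + c * (m₁ 0 + m₂ 0) ≤ M := hM ⟨_, hinit, rfl⟩
  calc g * s t + c * (m₁ t + m₂ t)
      ≤ g * (D + a) * sIn / ϑ + (M - g * (D + a) * sIn / ϑ) * exp (-ϑ * t) :=
        hV.trans (by gcongr)
    _ ≤ g * (D + a) * sIn / ϑ + ε := by linarith [hdecay t ht]

/-- If `ϑ > 0`, then for every `ε > 0` the compact set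
`B_ε = {(s,m₁,m₂) ∈ ℝ³₊ : g s + c(m₁+m₂) ≤ g D_max s_in/ϑ + ε}` absorbs every bounded set
`B ⊂ ℝ³₊`, uniformly over all admissible (continuous, `[−a,a]`-valued) noise paths. -/
theorem random_chemostat_absorbing_set
    (D a sIn c g d r α α₁ α₂ r₁ r₂ : ℝ)
    (ha : 0 < a) (hDa : a < D) (hsIn : 0 < sIn) (hc : 0 < c)
    (hg : 0 < g) (hgc : g ≤ c) (hd : 0 < d) (hr0 : 0 < r) (hr1 : r < 1)
    (hα : 0 < α) (hα₁ : 0 ≤ α₁) (hα₂ : 0 ≤ α₂) (hr₁ : 0 < r₁) (hr₂ : 0 < r₂)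
    (μ : ℝ → ℝ) (hμC1 : ContDiffOn ℝ 1 μ (Set.Ici 0)) (hμ0 : μ 0 = 0)
    (hμpos : ∀ x : ℝ, 0 < x → 0 < μ x) (hμle : ∀ x : ℝ, 0 ≤ x → μ x ≤ 1)
    (ϑ : ℝ) (hϑdef : ϑ = min (α * (D - a)) (min (d + α * (D - a) - g * c⁻¹ * r * d) d))
    (hϑpos : 0 < ϑ)
    (ε : ℝ) (hε : 0 < ε)
    (B : Set (ℝ × ℝ × ℝ)) (hBbdd : Bornology.IsBounded B)
    (hBoct : B ⊆ {p : ℝ × ℝ × ℝ | 0 ≤ p.1 ∧ 0 ≤ p.2.1 ∧ 0 ≤ p.2.2}) :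
    ∃ tB : ℝ, 0 < tB ∧
      ∀ φ : ℝ → ℝ, ContinuousOn φ (Set.Ici 0) →
        (∀ t ∈ Set.Ici (0:ℝ), φ t ∈ Set.Icc (-a) a) →
        ∀ s m₁ m₂ : ℝ → ℝ,
          (∀ t ∈ (Set.Ici (0:ℝ)),
            HasDerivWithinAt s ((D + φ t) * (sIn - α * s t) - c * μ (s t) * (m₁ t + m₂ t) + r * d * m₁ t) (Set.Ici (0:ℝ)) t ∧
            HasDerivWithinAt m₁ (m₁ t * (-d - α * (D + φ t) + g * μ (s t) - r₁ * m₁ t - r₂ * m₂ t - α₁) + α₂ * m₂ t) (Set.Ici (0:ℝ)) t ∧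
            HasDerivWithinAt m₂ (m₂ t * (-d + g * μ (s t) - r₁ * m₁ t - r₂ * m₂ t - α₂) + α₁ * m₁ t) (Set.Ici (0:ℝ)) t) →
          (∀ t ∈ (Set.Ici (0:ℝ)), 0 ≤ s t ∧ 0 ≤ m₁ t ∧ 0 ≤ m₂ t) →
          (s 0, m₁ 0, m₂ 0) ∈ B →
          ∀ t ≥ tB, (0 ≤ s t ∧ 0 ≤ m₁ t ∧ 0 ≤ m₂ t) ∧
            g * s t + c * (m₁ t + m₂ t) ≤ g * (D + a) * sIn / ϑ + ε :=
  random_chemostat_absorbing_set_general D a sIn c g d r α α₁ α₂ r₁ r₂ hsIn hc hg hα hr₁ hr₂ μ ϑ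
    hϑdef hϑpos ε hε B hBbdd
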